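/- arXiv:2412.18814 — 6 statements merged into one kernel-verified Lean document; each statement's English description precedes it below -/
import Mathlib

section
/- For all integers n ≥ 1 and N ≥ 2n+1, the Lovelock coefficients satisfy (N-1)·k12(n,N) = 2n·k21(n,N). -/
noncomputable def binom (m j : ℤ) : ℝ :=
  if 0 ≤ j ∧ j ≤ m then (m.toNat.choose j.toNat : ℝ) else 0

noncomputable def k11 (n N : ℤ) : ℝ :=
  -(1/2) * ((2*(n-1)).toNat.factorial : ℝ) * ((N : ℝ) - 2) * ((N : ℝ) - 1 - 2*(n : ℝ)) *
    binom (N - 3) (2*(n - 1))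

noncomputable def k12 (n N : ℤ) : ℝ :=
  -(1/2) * ((2*(n-1)).toNat.factorial : ℝ) *
    (2*((N : ℝ) - (n : ℝ) - 1) * binom (N - 2) (2*(n - 1))
      + ((N : ℝ) - 2) * ((N : ℝ) - 1 - 2*(n : ℝ)) * binom (N - 3) (2*n - 3))

noncomputable def k21 (n N : ℤ) : ℝ :=
  -(1/2) * ((2*(n-1)).toNat.factorial : ℝ) * ((N : ℝ) - 1) * ((N : ℝ) - 2) *
    binom (N - 3) (2*(n - 1))

/-- For all integers n ≥ 1 and N ≥ 2n+1: (N-1)·k12 = 2n·k21. -/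
theorem lovelock_k12_k21_relation (n N : ℤ) (hn : 1 ≤ n) (hN : 2*n + 1 ≤ N) :
    ((N : ℝ) - 1) * k12 n N = 2 * (n : ℝ) * k21 n N := by
  rcases eq_or_lt_of_le hn with h1 | h2
  · -- n = 1
    subst h1
    have e1 : binom (N - 3) (2*((1:ℤ) - 1)) = 1 := by
      rw [binom, if_pos ⟨by omega, by omega⟩]
      norm_num
    have e2 : binom (N - 2) (2*((1:ℤ) - 1)) = 1 := by
      rw [binom, if_pos ⟨by omega, by omega⟩]
      norm_num
    have e3 : binom (N - 3) (2*(1:ℤ) - 3) = 0 := by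
      rw [binom, if_neg]
      omega
    simp only [k12, k21, e1, e2, e3]
    push_cast
    ring
  · -- n ≥ 2
    have hn2 : 2 ≤ n := h2
    set a : ℕ := (N - 3).toNat with ha
    set k : ℕ := (2*n - 3).toNat with hk
    have hb1 : binom (N - 3) (2*(n - 1)) = (a.choose (k+1) : ℝ) := by
      rw [binom, if_pos ⟨by omega, by omega⟩]
      all_goals (congr 2 <;> omega)
    have hb2 : binom (N - 2) (2*(n - 1)) = ((a+1).choose (k+1) : ℝ) := by
      rw [binom, if_pos ⟨by omega, by omega⟩]
      all_goals (congr 2 <;> omega)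
    have hb3 : binom (N - 3) (2*n - 3) = (a.choose k : ℝ) := by
      rw [binom, if_pos ⟨by omega, by omega⟩]
      all_goals (congr 2 <;> omega)
    have hka : k + 1 ≤ a := by omega
    have hA : ((a+1).choose (k+1) : ℝ) = (a.choose k : ℝ) + (a.choose (k+1) : ℝ) := by
      exact_mod_cast congrArg (Nat.cast (R := ℝ)) (Nat.choose_succ_succ a k)
    have hrec : (a.choose (k+1) : ℝ) * ((k : ℝ) + 1) = (a.choose k : ℝ) * ((a : ℝ) - (k : ℝ)) := by
      have := Nat.choose_succ_right_eq a k
      have hsub : ((a - k : ℕ) : ℝ) = (a : ℝ) - (k : ℝ) := by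
        push_cast [Nat.cast_sub (by omega : k ≤ a)]; ring
      calc (a.choose (k+1) : ℝ) * ((k : ℝ) + 1)
          = ((a.choose (k+1) * (k+1) : ℕ) : ℝ) := by push_cast; ring
        _ = ((a.choose k * (a - k) : ℕ) : ℝ) := by rw [this]
        _ = (a.choose k : ℝ) * ((a : ℝ) - (k : ℝ)) := by push_cast [Nat.cast_sub (by omega : k ≤ a)]; ring
    have hkR : (k : ℝ) = 2*(n : ℝ) - 3 := by
      have : (k : ℤ) = 2*n - 3 := by omega
      exact_mod_cast this
    have haR : (a : ℝ) = (N : ℝ) - 3 := by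
      have : (a : ℤ) = N - 3 := by omega
      exact_mod_cast this
    rw [hkR, haR] at hrec
    simp only [k12, k21, hb1, hb2, hb3]
    set F : ℝ := ((2*(n-1)).toNat.factorial : ℝ)
    linear_combination (-(F*((N:ℝ)-1)*((N:ℝ)-(n:ℝ)-1))) * hA + ((1/2)*F*((N:ℝ)-1)*((N:ℝ)-1)) * hrec
end

section
/- (De Sitter vacuum solutions in a flat universe.) Let n ≥ 2 and N ≥ 2n+1 be integers and α_2, …, α_n real coupling constants. Suppose the real number H₀ satisfies the algebraic equation (1/2)·(N-1)·(N-2)·H₀² − Σ_{i=2}^{n} α_i·k21(i,N)·H₀^{2i} = 0. Then the scale factor a(t) = exp(H₀·t) satisfies both generalized flat Friedmann equations (P) and (D) with vanishing pressure p = 0 and vanishing density ρ = 0, for all t ∈ ℝ. -/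
/-- The Hubble function H = a'/a of a scale factor. -/
noncomputable def Hub (a : ℝ → ℝ) : ℝ → ℝ := fun t => deriv a t / a t

/- aux -/
lemma key (i N : ℕ) (hi : 2 ≤ i) (hN : 2*i+1 ≤ N) :
    k11 i N + k12 i N = k21 i N := by
  have e1 : ((N:ℤ)-3).toNat = N - 3 := by omega
  have e2 : ((N:ℤ)-2).toNat = N - 2 := by omega
  have e3 : (2*((i:ℤ)-1)).toNat = 2*i - 2 := by omega
  have e4 : (2*(i:ℤ)-3).toNat = 2*i - 3 := by omega
  have h1 : binom ((N:ℤ) - 3) (2*((i:ℤ) - 1)) = ((N-3).choose (2*i-2) : ℝ) := by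
    unfold binom; rw [if_pos ⟨by omega, by omega⟩, e1, e3]
  have h2 : binom ((N:ℤ) - 2) (2*((i:ℤ) - 1)) = ((N-2).choose (2*i-2) : ℝ) := by
    unfold binom; rw [if_pos ⟨by omega, by omega⟩, e2, e3]
  have h3 : binom ((N:ℤ) - 3) (2*(i:ℤ) - 3) = ((N-3).choose (2*i-3) : ℝ) := by
    unfold binom; rw [if_pos ⟨by omega, by omega⟩, e1, e4]
  have pascalN : (N-2).choose (2*i-2) = (N-3).choose (2*i-3) + (N-3).choose (2*i-2) := by
    have hA : N - 2 = (N-3) + 1 := by omega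
    have hB : 2*i - 2 = (2*i-3) + 1 := by omega
    rw [hA, hB, Nat.choose_succ_succ]
  have hmulN : (N-3).choose (2*i-2) * ((N-3) + 1) = ((N-3)+1).choose (2*i-2) * ((N-3) + 1 - (2*i-2)) :=
    Nat.choose_mul_succ_eq (N-3) (2*i-2)
  have pascal : ((N-2).choose (2*i-2) : ℝ)
      = ((N-3).choose (2*i-3) : ℝ) + ((N-3).choose (2*i-2) : ℝ) := by exact_mod_cast pascalN
  have hmul : ((N-3).choose (2*i-2) : ℝ) * ((N:ℝ) - 2)
      = ((N-2).choose (2*i-2) : ℝ) * ((N:ℝ) - 2*i) := by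
    have h5 : (N-3) + 1 = N - 2 := by omega
    have h6 : (N-3) + 1 - (2*i-2) = N - 2*i := by omega
    rw [h5] at hmulN
    rw [show N-2-(2*i-2) = N - 2*i from by omega] at hmulN
    have := congrArg (fun x : ℕ => (x : ℝ)) hmulN
    push_cast at this
    have c2 : ((N - 2 : ℕ) : ℝ) = (N:ℝ) - 2 := by push_cast [Nat.cast_sub (by omega : 2 ≤ N)]; ring
    have c3 : ((N - 2*i : ℕ) : ℝ) = (N:ℝ) - 2*i := by
      push_cast [Nat.cast_sub (by omega : 2*i ≤ N)]; ring
    rw [c2, c3] at this; exact this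
  unfold k11 k12 k21
  rw [h1, h2, h3]
  push_cast
  linear_combination ((1/2) * ((2*((i:ℤ)-1)).toNat.factorial : ℝ)) *
    ((((N:ℝ)-2)*((N:ℝ)-1-2*i)) * pascal + ((N:ℝ)-1) * hmul)

lemma hub_exp (H₀ : ℝ) : Hub (fun s => Real.exp (H₀ * s)) = fun _ => H₀ := by
  funext t
  have h : HasDerivAt (fun s => Real.exp (H₀ * s)) (Real.exp (H₀ * t) * (H₀ * 1)) t :=
    ((hasDerivAt_id t).const_mul H₀).exp
  unfold Hub
  rw [h.deriv]
  field_simp [Real.exp_ne_zero]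

/-- De Sitter vacuum solutions in a flat universe: if H₀ is a root of the
    algebraic equation, then a(t) = exp(H₀·t) solves both generalized flat
    Friedmann equations with p = 0 and ρ = 0. -/
theorem deSitter_flat_vacuum (n N : ℕ) (hn : 2 ≤ n) (hN : 2*n + 1 ≤ N)
    (α : ℕ → ℝ) (H₀ : ℝ)
    (hroot : (1/2) * ((N : ℝ) - 1) * ((N : ℝ) - 2) * H₀^2
      - ∑ i ∈ Finset.Icc 2 n, α i * k21 i N * H₀^(2*i) = 0) :
    ∀ t : ℝ,
      (-((N : ℝ) - 2) * (((N : ℝ) - 1)/2 * (Hub (fun s => Real.exp (H₀ * s)) t)^2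
            + deriv (Hub (fun s => Real.exp (H₀ * s))) t)
        + ∑ i ∈ Finset.Icc 2 n, α i *
            ((k11 i N + k12 i N) * (Hub (fun s => Real.exp (H₀ * s)) t)^(2*i)
              + k12 i N * deriv (Hub (fun s => Real.exp (H₀ * s))) t
                  * (Hub (fun s => Real.exp (H₀ * s)) t)^(2*i - 2)) = 0)
      ∧ (-(1/2) * ((N : ℝ) - 1) * ((N : ℝ) - 2) * (Hub (fun s => Real.exp (H₀ * s)) t)^2
        + ∑ i ∈ Finset.Icc 2 n, α i * k21 i N * (Hub (fun s => Real.exp (H₀ * s)) t)^(2*i)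
          = -0) := by
  intro t
  rw [hub_exp H₀]
  have hd : deriv (fun _ : ℝ => H₀) t = 0 := deriv_const t H₀
  rw [hd]
  have hsum : ∑ i ∈ Finset.Icc 2 n, α i * ((k11 i N + k12 i N) * H₀^(2*i) + k12 i N * 0 * H₀^(2*i-2))
      = ∑ i ∈ Finset.Icc 2 n, α i * k21 i N * H₀^(2*i) := by
    refine Finset.sum_congr rfl fun i hi => ?_
    obtain ⟨h2, hle⟩ := Finset.mem_Icc.mp hi
    rw [key i N h2 (by omega)]
    ring
  constructor
  · rw [hsum]; linarith [hroot]
  · rw [neg_zero]; linarith [hroot]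
end

section
/- (Constant Hubble function for the equation of state p = -ρ in a flat universe.) Let n ≥ 2 and N ≥ 2n+1 be integers, α_2, …, α_n real coupling constants, and let a(t) be a positive twice-differentiable scale factor on ℝ with Hubble function H = a'/a that satisfies both generalized flat Friedmann equations (P) and (D) with p(t) = -ρ(t) for all t. If in addition (2-N) + Σ_{i=2}^{n} α_i·k12(i,N)·H(t)^{2i-2} ≠ 0 for every t ∈ ℝ, then H is constant on ℝ. -/
lemma key_k (i N : ℕ) (hi : 2 ≤ i) (hiN : 2*i+1 ≤ N) :
    k11 i N + k12 i N = k21 i N := by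
  have hb1 : binom ((N:ℤ) - 3) (2*((i:ℤ) - 1)) = ((N-3).choose (2*i-2) : ℝ) := by
    rw [binom, if_pos ⟨by omega, by omega⟩]
    congr 2 <;> omega
  have hb2 : binom ((N:ℤ) - 2) (2*((i:ℤ) - 1)) = ((N-2).choose (2*i-2) : ℝ) := by
    rw [binom, if_pos ⟨by omega, by omega⟩]
    congr 2 <;> omega
  have hb3 : binom ((N:ℤ) - 3) (2*(i:ℤ) - 3) = ((N-3).choose (2*i-3) : ℝ) := by
    rw [binom, if_pos ⟨by omega, by omega⟩]
    congr 2 <;> omega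
  have pascal : (N-2).choose (2*i-2) = (N-3).choose (2*i-3) + (N-3).choose (2*i-2) := by
    rw [show N-2 = (N-3)+1 by omega, show 2*i-2 = (2*i-3)+1 by omega]
    exact Nat.choose_succ_succ _ _
  have cs : (N-3).choose (2*i-2) * (2*i-2) = (N-3).choose (2*i-3) * (N - 2*i) := by
    have h := Nat.choose_succ_right_eq (N-3) (2*i-3)
    rw [show 2*i-3+1 = 2*i-2 by omega, show (N-3) - (2*i-3) = N - 2*i by omega] at h
    exact h
  have P' : ((N-2).choose (2*i-2) : ℝ)
      = ((N-3).choose (2*i-3) : ℝ) + ((N-3).choose (2*i-2) : ℝ) := by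
    exact_mod_cast congrArg (Nat.cast : ℕ → ℝ) pascal
  have C' : ((N-3).choose (2*i-2) : ℝ) * (2*(i:ℝ) - 2)
      = ((N-3).choose (2*i-3) : ℝ) * ((N:ℝ) - 2*(i:ℝ)) := by
    have h := congrArg (Nat.cast : ℕ → ℝ) cs
    push_cast at h
    rw [Nat.cast_sub (by omega : 2 ≤ 2*i), Nat.cast_sub (by omega : 2*i ≤ N)] at h
    push_cast at h
    exact h
  unfold k11 k12 k21
  rw [hb1, hb2, hb3]
  set F : ℝ := ((2*((i:ℤ)-1)).toNat.factorial : ℝ)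
  linear_combination (-F*((N:ℝ)-(i:ℝ)-1)) * P' + ((1/2)*F*((N:ℝ)-1)) * C'

/-- For the equation of state p = −ρ in a flat universe, if the extra bracket never
    vanishes then the Hubble function is constant. -/
theorem constant_hubble_of_vacuum_eos (n N : ℕ) (hn : 2 ≤ n) (hN : 2*n + 1 ≤ N)
    (α : ℕ → ℝ) (a p ρ : ℝ → ℝ)
    (ha : ∀ t, 0 < a t)
    (hd1 : Differentiable ℝ a)
    (hd2 : Differentiable ℝ (deriv a))
    (hP : ∀ t, -((N : ℝ) - 2) * (((N : ℝ) - 1)/2 * (Hub a t)^2 + deriv (Hub a) t)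
        + ∑ i ∈ Finset.Icc 2 n, α i *
            ((k11 i N + k12 i N) * (Hub a t)^(2*i)
              + k12 i N * deriv (Hub a) t * (Hub a t)^(2*i - 2)) = p t)
    (hD : ∀ t, -(1/2) * ((N : ℝ) - 1) * ((N : ℝ) - 2) * (Hub a t)^2
        + ∑ i ∈ Finset.Icc 2 n, α i * k21 i N * (Hub a t)^(2*i) = -ρ t)
    (heos : ∀ t, p t = -ρ t)
    (hnz : ∀ t, (2 - (N : ℝ))
        + ∑ i ∈ Finset.Icc 2 n, α i * k12 i N * (Hub a t)^(2*i - 2) ≠ 0) :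
    ∀ s t : ℝ, Hub a s = Hub a t := by
  have hdiff : Differentiable ℝ (Hub a) :=
    hd2.div hd1 (fun t => (ha t).ne')
  have hderiv0 : ∀ t, deriv (Hub a) t = 0 := by
    intro t
    have e : (-((N : ℝ) - 2) * (((N : ℝ) - 1)/2 * (Hub a t)^2 + deriv (Hub a) t)
        + ∑ i ∈ Finset.Icc 2 n, α i *
            ((k11 i N + k12 i N) * (Hub a t)^(2*i)
              + k12 i N * deriv (Hub a) t * (Hub a t)^(2*i - 2)))
        = -(1/2) * ((N : ℝ) - 1) * ((N : ℝ) - 2) * (Hub a t)^2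
        + ∑ i ∈ Finset.Icc 2 n, α i * k21 i N * (Hub a t)^(2*i) :=
      (hP t).trans ((heos t).trans (hD t).symm)
    have hs : (∑ i ∈ Finset.Icc 2 n, α i *
            ((k11 i N + k12 i N) * (Hub a t)^(2*i)
              + k12 i N * deriv (Hub a) t * (Hub a t)^(2*i - 2)))
        = (∑ i ∈ Finset.Icc 2 n, α i * k21 i N * (Hub a t)^(2*i))
          + deriv (Hub a) t *
            ∑ i ∈ Finset.Icc 2 n, α i * k12 i N * (Hub a t)^(2*i - 2) := by
      rw [Finset.mul_sum, ← Finset.sum_add_distrib]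
      refine Finset.sum_congr rfl fun i hi => ?_
      have hi2 : 2 ≤ i := (Finset.mem_Icc.mp hi).1
      have hiN : 2*i + 1 ≤ N := by
        have := (Finset.mem_Icc.mp hi).2; omega
      rw [key_k i N hi2 hiN]
      ring
    rw [hs] at e
    have hmul : deriv (Hub a) t * ((2 - (N : ℝ))
        + ∑ i ∈ Finset.Icc 2 n, α i * k12 i N * (Hub a t)^(2*i - 2)) = 0 := by
      linear_combination e
    rcases mul_eq_zero.mp hmul with h | h
    · exact h
    · exact absurd h (hnz t)
  intro s t
  exact is_const_of_deriv_eq_zero hdiff hderiv0 s t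
end

section
/- (Generalized equation of motion.) Let n ≥ 2 and N ≥ 2n+1 be integers, α_2, …, α_n real coupling constants, κ ∈ {-1,0,1}, and let a(t) be a positive twice-differentiable scale factor satisfying both generalized Friedmann equations (P) and (D) with pressure p(t) and density ρ(t). Then, writing F₁ = (a')²/a² + κ/a² and F₂ = a''/a, for all t: (N-1)(N-2)·F₂ + Σ_{i=2}^{n} α_i·((k21(i,N)·(N-3) − k11(i,N)·(N-1))·F₁^i − k12(i,N)·(N-1)·F₂·F₁^{i-1}) = −((N-3)·ρ(t) + (N-1)·p(t)). -/
/-- F₁ = (a')²/a² + κ/a². -/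
noncomputable def F1 (κ : ℝ) (a : ℝ → ℝ) (t : ℝ) : ℝ :=
  (deriv a t)^2 / (a t)^2 + κ / (a t)^2

/-- F₂ = a''/a. -/
noncomputable def F2 (a : ℝ → ℝ) (t : ℝ) : ℝ :=
  deriv (deriv a) t / a t

/-- Generalized equation of motion derived from the two generalized Friedmann
    equations of Lovelock gravity. -/
theorem generalized_equation_of_motion (n N : ℕ) (hn : 2 ≤ n) (hN : 2*n + 1 ≤ N)
    (α : ℕ → ℝ) (κ : ℝ) (hκ : κ = -1 ∨ κ = 0 ∨ κ = 1)
    (a p ρ : ℝ → ℝ)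
    (ha : ∀ t, 0 < a t)
    (hd1 : Differentiable ℝ a)
    (hd2 : Differentiable ℝ (deriv a))
    (hP : ∀ t, -((N : ℝ) - 2) * (((N : ℝ) - 3)/2 * F1 κ a t + F2 a t)
        + ∑ i ∈ Finset.Icc 2 n, α i * (F1 κ a t)^(i - 1) *
            (k11 i N * F1 κ a t + k12 i N * F2 a t) = p t)
    (hD : ∀ t, -(1/2) * ((N : ℝ) - 1) * ((N : ℝ) - 2) * F1 κ a t
        + ∑ i ∈ Finset.Icc 2 n, α i * k21 i N * (F1 κ a t)^i = -ρ t) :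
    ∀ t : ℝ,
      ((N : ℝ) - 1) * ((N : ℝ) - 2) * F2 a t
        + ∑ i ∈ Finset.Icc 2 n, α i *
            ((k21 i N * ((N : ℝ) - 3) - k11 i N * ((N : ℝ) - 1)) * (F1 κ a t)^i
              - k12 i N * ((N : ℝ) - 1) * F2 a t * (F1 κ a t)^(i - 1))
        = -(((N : ℝ) - 3) * ρ t + ((N : ℝ) - 1) * p t) := by
  intro t
  have hs : ∑ i ∈ Finset.Icc 2 n, α i *
        ((k21 i N * ((N : ℝ) - 3) - k11 i N * ((N : ℝ) - 1)) * (F1 κ a t)^i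
          - k12 i N * ((N : ℝ) - 1) * F2 a t * (F1 κ a t)^(i - 1))
      = ((N : ℝ) - 3) * (∑ i ∈ Finset.Icc 2 n, α i * k21 i N * (F1 κ a t)^i)
        - ((N : ℝ) - 1) * (∑ i ∈ Finset.Icc 2 n, α i * (F1 κ a t)^(i - 1) *
            (k11 i N * F1 κ a t + k12 i N * F2 a t)) := by
    rw [Finset.mul_sum, Finset.mul_sum, ← Finset.sum_sub_distrib]
    refine Finset.sum_congr rfl ?_
    intro i hi
    have h1 : 1 ≤ i := le_trans one_le_two (Finset.mem_Icc.mp hi).1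
    have hp : (F1 κ a t)^i = (F1 κ a t)^(i-1) * F1 κ a t := by
      rw [← pow_succ]
      congr 1
      omega
    rw [hp]; ring
  rw [hs]
  linear_combination ((N : ℝ) - 3) * hD t - ((N : ℝ) - 1) * hP t
end

section
/- (Type I pressure-free solution in an open universe.) Let n ≥ 2 and N ≥ 2n+1 be integers, α_2, …, α_n real coupling constants, and let C₁ > 0 be a real number satisfying 2 − N + Σ_{i=2}^{n} α_i·k12(i,N)·C₁^{i-1}/i = 0. Then the scale factor a(t) = sinh(√C₁·t)/√C₁ satisfies the generalized Friedmann pressure equation (P) with spatial curvature κ = -1 and p = 0, for all t > 0. -/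
lemma key_identity (i N : ℕ) (hi : 2 ≤ i) (hN : 2*i+1 ≤ N) :
    k11 i N + k12 i N = ((N:ℝ)-1)/(2*i) * k12 i N := by
  have e1 : binom ((N:ℤ) - 3) (2*((i:ℤ) - 1)) = ((N-3).choose (2*i-2) : ℝ) := by
    rw [binom, if_pos (by omega)]; congr 2 <;> omega
  have e2 : binom ((N:ℤ) - 2) (2*((i:ℤ) - 1)) = ((N-2).choose (2*i-2) : ℝ) := by
    rw [binom, if_pos (by omega)]; congr 2 <;> omega
  have e3 : binom ((N:ℤ) - 3) (2*(i:ℤ) - 3) = ((N-3).choose (2*i-3) : ℝ) := by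
    rw [binom, if_pos (by omega)]; congr 2 <;> omega
  have hB : ((N-3).choose (2*i-2)) * (N-2) = ((N-2).choose (2*i-2)) * (N-2*i) := by
    have h := Nat.choose_mul_succ_eq (N-3) (2*i-2)
    rw [show N-3+1 = N-2 by omega, show N-2-(2*i-2) = N-2*i by omega] at h
    exact h
  have hD : ((N-3).choose (2*i-2)) * (2*i-2) = ((N-3).choose (2*i-3)) * (N-2*i) := by
    have h := Nat.choose_succ_right_eq (N-3) (2*i-3)
    rw [show 2*i-3+1 = 2*i-2 by omega, show N-3-(2*i-3) = N-2*i by omega] at h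
    exact h
  have hx : ((N:ℝ) - 2*i) ≠ 0 := by
    have : (2*i+1:ℝ) ≤ N := by exact_mod_cast hN
    nlinarith
  have hBr : ((N-3).choose (2*i-2) : ℝ) * ((N:ℝ)-2)
      = ((N-2).choose (2*i-2) : ℝ) * ((N:ℝ)-2*i) := by
    have h := congrArg (Nat.cast (R := ℝ)) hB
    rw [Nat.cast_mul, Nat.cast_mul, Nat.cast_sub (by omega), Nat.cast_sub (by omega)] at h
    push_cast at h
    convert h using 2 <;> ring
  have hDr : ((N-3).choose (2*i-2) : ℝ) * (2*(i:ℝ)-2)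
      = ((N-3).choose (2*i-3) : ℝ) * ((N:ℝ)-2*i) := by
    have h := congrArg (Nat.cast (R := ℝ)) hD
    rw [Nat.cast_mul, Nat.cast_mul, Nat.cast_sub (by omega), Nat.cast_sub (by omega)] at h
    push_cast at h
    convert h using 2 <;> ring
  set A := ((N-3).choose (2*i-2) : ℝ)
  set B := ((N-2).choose (2*i-2) : ℝ)
  set D := ((N-3).choose (2*i-3) : ℝ)
  have hB2 : B = A * ((N:ℝ)-2) / ((N:ℝ)-2*i) := by
    rw [eq_div_iff hx]; linarith [hBr]
  have hD2 : D = A * (2*(i:ℝ)-2) / ((N:ℝ)-2*i) := by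
    rw [eq_div_iff hx]; linarith [hDr]
  have hi' : (2*(i:ℝ)) ≠ 0 := by
    have : (2:ℝ) ≤ i := by exact_mod_cast hi
    nlinarith
  rw [k11, k12, e1, e2, e3, hB2, hD2]
  push_cast
  field_simp
  ring

/-- Type I pressure-free solution in an open universe: if C₁ > 0 is a root of the
    algebraic equation then a(t) = sinh(√C₁·t)/√C₁ solves the generalized
    Friedmann pressure equation with κ = −1 and p = 0 for t > 0. -/
theorem open_pressure_free_solution (n N : ℕ) (hn : 2 ≤ n) (hN : 2*n + 1 ≤ N)
    (α : ℕ → ℝ) (C₁ : ℝ) (hC : 0 < C₁)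
    (hroot : 2 - (N : ℝ)
      + ∑ i ∈ Finset.Icc 2 n, α i * k12 i N * C₁^(i - 1) / (i : ℝ) = 0) :
    ∀ t : ℝ, 0 < t →
      -((N : ℝ) - 2) * (((N : ℝ) - 3)/2
            * F1 (-1) (fun s => Real.sinh (Real.sqrt C₁ * s) / Real.sqrt C₁) t
          + F2 (fun s => Real.sinh (Real.sqrt C₁ * s) / Real.sqrt C₁) t)
        + ∑ i ∈ Finset.Icc 2 n, α i *
            (F1 (-1) (fun s => Real.sinh (Real.sqrt C₁ * s) / Real.sqrt C₁) t)^(i - 1) *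
            (k11 i N * F1 (-1) (fun s => Real.sinh (Real.sqrt C₁ * s) / Real.sqrt C₁) t
              + k12 i N * F2 (fun s => Real.sinh (Real.sqrt C₁ * s) / Real.sqrt C₁) t)
        = 0 := by
  intro t ht
  set c := Real.sqrt C₁ with hc
  have hc0 : 0 < c := Real.sqrt_pos.mpr hC
  have hc2 : c^2 = C₁ := Real.sq_sqrt hC.le
  set a : ℝ → ℝ := fun s => Real.sinh (c * s) / c with ha
  -- first derivative
  have hd1 : ∀ s : ℝ, HasDerivAt a (Real.cosh (c * s)) s := by
    intro s
    have hid : HasDerivAt (fun x : ℝ => c * x) c s := by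
      simpa using (hasDerivAt_id s).const_mul c
    have h := (hid.sinh).div_const c
    simpa [mul_div_assoc, div_self hc0.ne'] using h
  have hderiv : deriv a = fun s => Real.cosh (c * s) := funext fun s => (hd1 s).deriv
  have hd2 : HasDerivAt (fun s => Real.cosh (c * s)) (Real.sinh (c * t) * c) t := by
    have hid : HasDerivAt (fun x : ℝ => c * x) c t := by
      simpa using (hasDerivAt_id t).const_mul c
    exact hid.cosh
  have hsinh : 0 < Real.sinh (c * t) := Real.sinh_pos_iff.mpr (by positivity)
  have hat : a t ≠ 0 := by
    simp only [ha]
    positivity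
  -- F1 = C₁
  have hF1 : F1 (-1) a t = C₁ := by
    rw [F1, hderiv]
    have hat2 : (a t)^2 = Real.sinh (c*t)^2 / c^2 := by
      rw [ha]; ring
    rw [hat2]
    have hs2 : Real.sinh (c*t)^2 ≠ 0 := by positivity
    field_simp
    have := Real.cosh_sq_sub_sinh_sq (c*t)
    nlinarith [this, hc2]
  -- F2 = C₁
  have hF2 : F2 a t = C₁ := by
    rw [F2, hderiv, hd2.deriv, ha]
    field_simp
    nlinarith [hc2]
  rw [hF1, hF2]
  -- rewrite the sum
  have hsum : ∑ i ∈ Finset.Icc 2 n, α i * C₁^(i-1) * (k11 i N * C₁ + k12 i N * C₁)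
      = ((N:ℝ)-1)/2 * C₁ * ∑ i ∈ Finset.Icc 2 n, α i * k12 i N * C₁^(i-1) / (i:ℝ) := by
    rw [Finset.mul_sum]
    refine Finset.sum_congr rfl fun i hi => ?_
    obtain ⟨hi2, hin⟩ := Finset.mem_Icc.mp hi
    have hiN : 2*i + 1 ≤ N := by omega
    have hk := key_identity i N hi2 hiN
    have hiR : (i:ℝ) ≠ 0 := by positivity
    have : k11 i N * C₁ + k12 i N * C₁ = (k11 i N + k12 i N) * C₁ := by ring
    rw [this, hk]
    field_simp
  rw [hsum]
  have hs' : ∑ i ∈ Finset.Icc 2 n, α i * k12 i N * C₁^(i-1) / (i:ℝ) = (N:ℝ) - 2 := by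
    linarith [hroot]
  rw [hs']
  ring
end

section
/- (Type I pressure-free solution in a closed universe.) Let n ≥ 2 and N ≥ 2n+1 be integers, α_2, …, α_n real coupling constants, and let C₁ > 0 be a real number satisfying 2 − N + Σ_{i=2}^{n} α_i·k12(i,N)·C₁^{i-1}/i = 0. Then the scale factor a(t) = cosh(√C₁·t)/√C₁ satisfies the generalized Friedmann pressure equation (P) with spatial curvature κ = +1 and p = 0, for all t ∈ ℝ. -/
/-!
On `a(t) = cosh(c t)/c` one has `a' = sinh(c t)`, `a'' = c² a`, so with `κ = 1` both `F₁` and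
`F₂` are the constant `c² = C₁`. Both `k11 + k12` and `k12` are multiples of `(N-2i) C(N-2, 2i-2)`
(by Pascal's rule and `(N-2) C(N-3, 2i-3) = (2i-2) C(N-2, 2i-2)`), which yields
`2i (k11 + k12) = (N-1) k12`. The left side of (P) therefore equals `(N-1) C₁ / 2` times the left
side of the algebraic equation defining `C₁`.
-/

lemma binom_natCast (m j : ℕ) : binom m j = m.choose j := by
  unfold binom
  split_ifs with h
  · simp
  · rw [Nat.choose_eq_zero_of_lt (by omega), Nat.cast_zero]

section Coefficients

variable {i N : ℕ} (hi : 2 ≤ i) (hN : 3 ≤ N)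
include hi hN

lemma k12_eq_choose :
    k12 i N = -((2*i - 2).factorial : ℝ) * i * ((N : ℝ) - 2*i) * (N - 2).choose (2*i - 2) := by
  obtain ⟨j, rfl⟩ : ∃ j, i = j + 2 := ⟨i - 2, by omega⟩
  obtain ⟨m, rfl⟩ : ∃ m, N = m + 3 := ⟨N - 3, by omega⟩
  have hcast : ((m + 3 : ℕ) : ℤ) - 2 = ((m + 1 : ℕ) : ℤ) ∧ ((m + 3 : ℕ) : ℤ) - 3 = (m : ℕ)
      ∧ 2 * (((j + 2 : ℕ) : ℤ) - 1) = ((2*j + 2 : ℕ) : ℤ)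
      ∧ 2 * ((j + 2 : ℕ) : ℤ) - 3 = ((2*j + 1 : ℕ) : ℤ) := by omega
  -- `(N-2) C(N-3, 2i-3) = (2i-2) C(N-2, 2i-2)`
  have hmul : ((m + 1 : ℕ) : ℝ) * m.choose (2*j + 1) = (m + 1).choose (2*j + 2) * (2*j + 2) := by
    exact_mod_cast Nat.add_one_mul_choose_eq m (2*j + 1)
  simp only [k12, hcast, binom_natCast, Int.toNat_natCast,
    show 2 * (j + 2) - 2 = 2*j + 2 by omega, show m + 3 - 2 = m + 1 by omega]
  push_cast at hmul ⊢
  linear_combination (-(1/2) * ((2*j + 2).factorial : ℝ) * ((m : ℝ) - 2*j - 2)) * hmul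

lemma k11_add_k12_eq_choose :
    k11 i N + k12 i N
      = -(1/2) * ((2*i - 2).factorial : ℝ) * ((N : ℝ) - 1) * ((N : ℝ) - 2*i)
          * (N - 2).choose (2*i - 2) := by
  obtain ⟨j, rfl⟩ : ∃ j, i = j + 2 := ⟨i - 2, by omega⟩
  obtain ⟨m, rfl⟩ : ∃ m, N = m + 3 := ⟨N - 3, by omega⟩
  have hcast : ((m + 3 : ℕ) : ℤ) - 2 = ((m + 1 : ℕ) : ℤ) ∧ ((m + 3 : ℕ) : ℤ) - 3 = (m : ℕ)
      ∧ 2 * (((j + 2 : ℕ) : ℤ) - 1) = ((2*j + 2 : ℕ) : ℤ)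
      ∧ 2 * ((j + 2 : ℕ) : ℤ) - 3 = ((2*j + 1 : ℕ) : ℤ) := by omega
  have hpascal : ((m + 1).choose (2*j + 2) : ℝ) = m.choose (2*j + 1) + m.choose (2*j + 2) := by
    exact_mod_cast Nat.choose_succ_succ m (2*j + 1)
  simp only [k11, k12, hcast, binom_natCast, Int.toNat_natCast,
    show 2 * (j + 2) - 2 = 2*j + 2 by omega, show m + 3 - 2 = m + 1 by omega]
  push_cast at hpascal ⊢
  linear_combination ((1/2) * ((2*j + 2).factorial : ℝ) * ((m : ℝ) + 1) * ((m : ℝ) - 2*j - 2))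
    * hpascal

lemma k11_add_k12_eq : k11 i N + k12 i N = ((N : ℝ) - 1) * k12 i N / (2*i) := by
  have hi0 : (i : ℝ) ≠ 0 := by positivity
  rw [k11_add_k12_eq_choose hi hN, k12_eq_choose hi hN]
  field_simp

end Coefficients

section ScaleFactor

variable {c : ℝ} (hc : c ≠ 0)
include hc

lemma deriv_cosh_mul_div : deriv (fun s => Real.cosh (c * s) / c) = fun t => Real.sinh (c * t) := by
  funext t
  have h := (((hasDerivAt_id t).const_mul c).cosh).div_const c
  simp only [mul_one, id] at h
  rw [h.deriv, mul_div_assoc, div_self hc, mul_one]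

lemma deriv_deriv_cosh_mul_div :
    deriv (deriv fun s => Real.cosh (c * s) / c) = fun t => c * Real.cosh (c * t) := by
  rw [deriv_cosh_mul_div hc]
  funext t
  have h := ((hasDerivAt_id t).const_mul c).sinh
  simp only [mul_one, id] at h
  rw [h.deriv, mul_comm]

lemma F1_cosh_mul_div (t : ℝ) : F1 1 (fun s => Real.cosh (c * s) / c) t = c^2 := by
  have hcosh : Real.cosh (c * t) ≠ 0 := (Real.cosh_pos _).ne'
  simp only [F1, deriv_cosh_mul_div hc, ← add_div, ← Real.cosh_sq]
  field_simp

lemma F2_cosh_mul_div (t : ℝ) : F2 (fun s => Real.cosh (c * s) / c) t = c^2 := by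
  have hcosh : Real.cosh (c * t) ≠ 0 := (Real.cosh_pos _).ne'
  simp only [F2, deriv_deriv_cosh_mul_div hc]
  field_simp

end ScaleFactor

theorem closed_pressure_free_solution_general (n N : ℕ) (hN : 2*n + 1 ≤ N)
    (α : ℕ → ℝ) (C₁ : ℝ) (hC : 0 < C₁)
    (hroot : 2 - (N : ℝ)
      + ∑ i ∈ Finset.Icc 2 n, α i * k12 i N * C₁^(i - 1) / (i : ℝ) = 0) :
    ∀ t : ℝ,
      -((N : ℝ) - 2) * (((N : ℝ) - 3)/2
            * F1 1 (fun s => Real.cosh (Real.sqrt C₁ * s) / Real.sqrt C₁) t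
          + F2 (fun s => Real.cosh (Real.sqrt C₁ * s) / Real.sqrt C₁) t)
        + ∑ i ∈ Finset.Icc 2 n, α i *
            (F1 1 (fun s => Real.cosh (Real.sqrt C₁ * s) / Real.sqrt C₁) t)^(i - 1) *
            (k11 i N * F1 1 (fun s => Real.cosh (Real.sqrt C₁ * s) / Real.sqrt C₁) t
              + k12 i N * F2 (fun s => Real.cosh (Real.sqrt C₁ * s) / Real.sqrt C₁) t)
        = 0 := by
  intro t
  have hc : Real.sqrt C₁ ≠ 0 := (Real.sqrt_pos.mpr hC).ne'
  rw [F1_cosh_mul_div hc, F2_cosh_mul_div hc, Real.sq_sqrt hC.le]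
  have hsum : ∑ i ∈ Finset.Icc 2 n, α i * C₁^(i - 1) * (k11 i N * C₁ + k12 i N * C₁)
      = ((N : ℝ) - 1) * C₁ / 2 * ∑ i ∈ Finset.Icc 2 n, α i * k12 i N * C₁^(i - 1) / (i : ℝ) := by
    rw [Finset.mul_sum]
    refine Finset.sum_congr rfl fun i hi => ?_
    obtain ⟨hi2, hin⟩ := Finset.mem_Icc.mp hi
    rw [← add_mul, k11_add_k12_eq hi2 (by omega)]
    ring
  rw [hsum, show ∑ i ∈ Finset.Icc 2 n, α i * k12 i N * C₁^(i - 1) / (i : ℝ) = (N : ℝ) - 2 by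
    linarith]
  ring

/-- Type I pressure-free solution in a closed universe: if C₁ > 0 is a root of the
    algebraic equation then a(t) = cosh(√C₁·t)/√C₁ solves the generalized
    Friedmann pressure equation with κ = +1 and p = 0 for all t. -/
theorem closed_pressure_free_solution (n N : ℕ) (hn : 2 ≤ n) (hN : 2*n + 1 ≤ N)
    (α : ℕ → ℝ) (C₁ : ℝ) (hC : 0 < C₁)
    (hroot : 2 - (N : ℝ)
      + ∑ i ∈ Finset.Icc 2 n, α i * k12 i N * C₁^(i - 1) / (i : ℝ) = 0) :
    ∀ t : ℝ,
      -((N : ℝ) - 2) * (((N : ℝ) - 3)/2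
            * F1 1 (fun s => Real.cosh (Real.sqrt C₁ * s) / Real.sqrt C₁) t
          + F2 (fun s => Real.cosh (Real.sqrt C₁ * s) / Real.sqrt C₁) t)
        + ∑ i ∈ Finset.Icc 2 n, α i *
            (F1 1 (fun s => Real.cosh (Real.sqrt C₁ * s) / Real.sqrt C₁) t)^(i - 1) *
            (k11 i N * F1 1 (fun s => Real.cosh (Real.sqrt C₁ * s) / Real.sqrt C₁) t
              + k12 i N * F2 (fun s => Real.cosh (Real.sqrt C₁ * s) / Real.sqrt C₁) t)
        = 0 :=
  closed_pressure_free_solution_general n N hN α C₁ hC hroot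
end
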